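/- Let R = (V, ≤, (ρ_i)_{i∈I}) be an ordered binary structure. Every equivalence class A of the relation ≃_R is either an interval of the linear order (V, ≤), or a two-element set {x, y} with x < y such that the open interval ]x,y[ = {z : x < z < y} is itself an equivalence class of ≃_R. -/

import Mathlib

/-- An ordered binary structure: a domain `V`, a linear order `le` on `V`,
and a family of binary relations `rel i` on `V` indexed by `ι`. -/
structure OrdBin (ι : Type) where
  V : Type
  le : V → V → Prop
  linear : IsLinearOrder V le
  rel : ι → V → V → Prop

namespace OrdBin

variable {ι : Type}

/-- The substructure induced on a subset `A` of the domain. -/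
def restrict (R : OrdBin ι) (A : Set R.V) : OrdBin ι where
  V := A
  le := fun a b => R.le a.1 b.1
  linear := by
    haveI := R.linear
    exact
      { refl := fun a => refl_of R.le a.1
        trans := fun a b c hab hbc => trans_of R.le hab hbc
        antisymm := fun a b hab hba => Subtype.ext (antisymm_of R.le hab hba)
        total := fun a b => total_of R.le a.1 b.1 }
  rel := fun i a b => R.rel i a.1 b.1

/-- Isomorphism of ordered binary structures: a bijection of the domains preserving
the linear order and each binary relation. -/
def Iso (R S : OrdBin ι) : Prop :=
  ∃ e : R.V ≃ S.V, (∀ x y : R.V, R.le x y ↔ S.le (e x) (e y)) ∧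
    ∀ (i : ι) (x y : R.V), R.rel i x y ↔ S.rel i (e x) (e y)

/-- `R` embeds in `S` if `R` is isomorphic to an induced substructure of `S`. -/
def Embeds (R S : OrdBin ι) : Prop :=
  ∃ A : Set S.V, Iso R (S.restrict A)

/-- `B` is a monomorphic part of `R`: any two finite subsets of the domain of the
same cardinality which agree outside `B` induce isomorphic substructures. -/
def MonoPart (R : OrdBin ι) (B : Set R.V) : Prop :=
  ∀ A A' : Set R.V, A.Finite → A'.Finite → A.ncard = A'.ncard →
    A \ B = A' \ B → Iso (R.restrict A) (R.restrict A')

/-- A monomorphic decomposition of `R`: a partition of the domain into monomorphic parts. -/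
def MonoDecomp (R : OrdBin ι) (P : Set (Set R.V)) : Prop :=
  Setoid.IsPartition P ∧ ∀ B ∈ P, R.MonoPart B

/-- `R` has a monomorphic decomposition with finitely many blocks. -/
def HasFiniteMonoDecomp (R : OrdBin ι) : Prop :=
  ∃ P : Set (Set R.V), R.MonoDecomp P ∧ P.Finite

/-- A hereditary class of finite ordered binary structures. -/
def Hereditary (C : Set (OrdBin ι)) : Prop :=
  (∀ R ∈ C, Finite R.V) ∧ ∀ R ∈ C, ∀ S : OrdBin ι, Embeds S R → S ∈ C

/-- `x` and `y` are `F`-equivalent: the substructures induced on `{x} ∪ F` and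
`{y} ∪ F` are isomorphic. -/
def EqF (R : OrdBin ι) (F : Set R.V) (x y : R.V) : Prop :=
  Iso (R.restrict (insert x F)) (R.restrict (insert y F))

/-- `x ≃_{m,R} y`: `x` and `y` are `F`-equivalent for every `m`-element subset `F`
of `V \ {x, y}`. -/
def EqM (R : OrdBin ι) (m : ℕ) (x y : R.V) : Prop :=
  ∀ F : Set R.V, F.Finite → F.ncard = m → x ∉ F → y ∉ F → EqF R F x y

/-- `x ≃_{≤m,R} y`: `x ≃_{m',R} y` for every `m' ≤ m`. -/
def EqLe (R : OrdBin ι) (m : ℕ) (x y : R.V) : Prop :=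
  ∀ m' ≤ m, EqM R m' x y

/-- `x ≃_R y`: `x ≃_{m,R} y` for every `m`. -/
def EqR (R : OrdBin ι) (x y : R.V) : Prop :=
  ∀ m : ℕ, EqM R m x y

/-- `d(x,y) = d(x',y')`: the pair of truth values `(ρ_i(x,y), ρ_i(y,x))` agrees with
`(ρ_i(x',y'), ρ_i(y',x'))` for every `i`. -/
def dEq (R : OrdBin ι) (x y x' y' : R.V) : Prop :=
  ∀ i : ι, (R.rel i x y ↔ R.rel i x' y') ∧ (R.rel i y x ↔ R.rel i y' x')

/-- `A` is an interval of the linear order `(V, le)`. -/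
def IntervalLe (R : OrdBin ι) (A : Set R.V) : Prop :=
  ∀ u ∈ A, ∀ w ∈ A, ∀ z : R.V, R.le u z → R.le z w → z ∈ A

/-- `A` is an interval of `R`: an interval of the order such that all elements of `A`
have the same relations to each element outside `A`. -/
def IntervalR (R : OrdBin ι) (A : Set R.V) : Prop :=
  IntervalLe R A ∧ ∀ u ∈ A, ∀ u' ∈ A, ∀ w ∉ A, dEq R u w u' w

/-- `R` is `n`-monomorphic: the substructures induced on any two `n`-element subsets
of the domain are isomorphic. -/
def NMono (R : OrdBin ι) (n : ℕ) : Prop :=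
  ∀ A A' : Set R.V, A.Finite → A'.Finite → A.ncard = n → A'.ncard = n →
    Iso (R.restrict A) (R.restrict A')

/-- `R` is `(≤n)`-monomorphic. -/
def LeMono (R : OrdBin ι) (n : ℕ) : Prop :=
  ∀ m ≤ n, NMono R m

/-- `R` is monomorphic. -/
def Mono (R : OrdBin ι) : Prop :=
  ∀ n : ℕ, NMono R n

/-- The profile of `R`: the number of induced substructures on `n`-element subsets
of the domain, counted up to isomorphism. -/
noncomputable def profileR (R : OrdBin ι) (n : ℕ) : ℕ :=
  Nat.card (Quot fun (A B : {A : Set R.V // A.Finite ∧ A.ncard = n}) =>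
    Iso (R.restrict A.1) (R.restrict B.1))

/-- The profile of a class `C`: the number of members of `C` with exactly `n`
elements, counted up to isomorphism. -/
noncomputable def profileC (C : Set (OrdBin ι)) (n : ℕ) : ℕ :=
  Nat.card (Quot fun (R S : {R : OrdBin ι // R ∈ C ∧ Nat.card R.V = n}) =>
    Iso R.1 S.1)

end OrdBin

/-- The Fibonacci sequence with `F 0 = F 1 = 1`. -/
def fib1 : ℕ → ℕ
  | 0 => 1
  | 1 => 1
  | n + 2 => fib1 (n + 1) + fib1 n

/-!
Suppose `u ≃ w` with `u < w`. Comparing `{u} ∪ F` with `{w} ∪ F` for sets `F` of one or two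
points shows that loops are constant on `[u, w]`, that all pairs `p < q` of `[u, w]` other than
`(u, w)` carry the same relations, and that every point outside `[u, w]` is related in the same way
to all points of `[u, w]`.

Conversely, let `S` be an interval of `R` on which all increasing pairs, and all loops, look
alike. For `x, y ∈ S`, the order isomorphism `{x} ∪ F ≃o {y} ∪ F` fixes the points of `F \ S`
(their ranks agree) and maps `S` into `S`, so it preserves every relation: `x ≃ y`.

Now let a class contain `u ≤ z ≤ w` with `z` outside it. If `(u, w)` looked like the other pairs
of `[u, w]`, then `[u, w]` would be such an interval and `z ≃ u`. So `(u, w)` is exceptional;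
then `]u, w[` is such an interval, and the exceptional pair rules out any further point
equivalent to `u`, or to `z` outside `]u, w[`.
-/

section LinearOrder

variable {V : Type*} [LinearOrder V]

open Set

theorem eq_and_eq_of_lt_of_subset_pair {T : Set V} {a b x y : V} (hT : T ⊆ {a, b})
    (hx : x ∈ T) (hy : y ∈ T) (hxy : x < y) (hab : a < b) : x = a ∧ y = b := by
  rcases hT hx with rfl | rfl <;> rcases hT hy with rfl | rfl <;> first | exact ⟨rfl, rfl⟩ | order

theorem eq_and_eq_and_eq_of_lt_of_subset_triple {T : Set V} {a b c x y z : V}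
    (hT : T ⊆ {a, b, c}) (hx : x ∈ T) (hy : y ∈ T) (hz : z ∈ T) (hxy : x < y) (hyz : y < z)
    (hab : a < b) (hbc : b < c) : x = a ∧ y = b ∧ z = c := by
  rcases hT hx with rfl | rfl | rfl <;> rcases hT hy with rfl | rfl | rfl <;>
    rcases hT hz with rfl | rfl | rfl <;> first | exact ⟨rfl, rfl, rfl⟩ | order

theorem Set.Finite.nonempty_orderIso {D D' : Set V} (hD : D.Finite) (hD' : D'.Finite)
    (h : D.ncard = D'.ncard) : Nonempty (D ≃o D') := by
  have := hD.fintype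
  have := hD'.fintype
  rw [ncard_eq_toFinset_card', ncard_eq_toFinset_card', toFinset_card, toFinset_card] at h
  exact ⟨(Fintype.orderIsoFinOfCardEq D rfl).symm.trans (Fintype.orderIsoFinOfCardEq D' h.symm)⟩

theorem OrderIso.ncard_inter_Iic {D D' : Set V} (σ : D ≃o D') (a : D) :
    (D ∩ Iic (a : V)).ncard = (D' ∩ Iic (σ a : V)).ncard := by
  refine ncard_congr (fun s hs => (σ ⟨s, hs.1⟩ : V)) (fun s hs => ⟨(σ _).2, σ.monotone hs.2⟩)
    (fun s t hs ht h => congrArg Subtype.val (σ.injective (Subtype.ext h))) ?_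
  intro b hb
  refine ⟨σ.symm ⟨b, hb.1⟩, ⟨(σ.symm _).2, ?_⟩, by simp⟩
  exact σ.symm_apply_le.2 hb.2

theorem eq_of_ncard_inter_Iic_eq {D : Set V} (hD : D.Finite) {a b : V} (ha : a ∈ D)
    (hb : b ∈ D) (h : (D ∩ Iic a).ncard = (D ∩ Iic b).ncard) : a = b := by
  have key : ∀ {a b : V}, a ∈ D → b ∈ D → a < b → (D ∩ Iic a).ncard < (D ∩ Iic b).ncard :=
    fun {a b} ha hb hab => ncard_lt_ncard
      (ssubset_iff_subset_ne.2 ⟨inter_subset_inter_right _ (Iic_subset_Iic.2 hab.le),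
        fun h => hab.not_ge (h.symm.subset (⟨hb, le_rfl⟩ : b ∈ D ∩ Iic b)).2⟩)
        (hD.inter_of_left _)
  rcases lt_trichotomy a b with hab | hab | hab
  · exact absurd h (key ha hb hab).ne
  · exact hab
  · exact absurd h (key hb ha hab).ne'

theorem OrderIso.apply_eq_of_ncard_inter_Iic_eq {D D' : Set V} (hD' : D'.Finite) (σ : D ≃o D')
    (a : D) {b : V} (hb : b ∈ D') (h : (D ∩ Iic (a : V)).ncard = (D' ∩ Iic b).ncard) :
    (σ a : V) = b :=
  eq_of_ncard_inter_Iic_eq hD' (σ a).2 hb ((σ.ncard_inter_Iic a).symm.trans h)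

theorem ncard_insert_inter_Iic_eq {F : Set V} (hF : F.Finite) {x y t : V} (hx : x ∉ F)
    (hy : y ∉ F) (hxy : x ≤ t ↔ y ≤ t) :
    (insert x F ∩ Iic t).ncard = (insert y F ∩ Iic t).ncard := by
  have hFt : (F ∩ Iic t).Finite := hF.inter_of_left _
  by_cases hxt : x ≤ t
  · rw [insert_inter_of_mem (mem_Iic.2 hxt), insert_inter_of_mem (mem_Iic.2 (hxy.1 hxt)),
      ncard_insert_of_notMem (fun h => hx h.1) hFt, ncard_insert_of_notMem (fun h => hy h.1) hFt]
  · rw [insert_inter_of_notMem (mt mem_Iic.1 hxt),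
      insert_inter_of_notMem (mt (mem_Iic.1 · |> hxy.2) hxt)]

theorem Set.OrdConnected.le_iff_le_of_notMem {S : Set V} (hS : S.OrdConnected) {x y t : V}
    (hx : x ∈ S) (hy : y ∈ S) (ht : t ∉ S) : x ≤ t ↔ y ≤ t :=
  ⟨fun hxt => not_lt.1 fun hty => ht (hS.out hx hy ⟨hxt, hty.le⟩),
    fun hyt => not_lt.1 fun htx => ht (hS.out hy hx ⟨hyt, htx.le⟩)⟩

end LinearOrder

namespace OrdBin

variable {ι : Type}

open Set

noncomputable instance instLinearOrder (R : OrdBin ι) : LinearOrder R.V :=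
  haveI := R.linear
  { le := R.le
    le_refl := refl_of R.le
    le_trans := fun _ _ _ => trans_of R.le
    le_antisymm := fun _ _ => antisymm_of R.le
    le_total := total_of R.le
    toDecidableLE := Classical.decRel _ }

variable {R : OrdBin ι} {u w z : R.V}

theorem intervalLe_iff_ordConnected {A : Set R.V} : IntervalLe R A ↔ A.OrdConnected :=
  ⟨fun h => ⟨fun _ hu _ hw _ hz => h _ hu _ hw _ hz.1 hz.2⟩,
    fun h _ hu _ hw _ huz hzw => h.out hu hw ⟨huz, hzw⟩⟩

theorem dEq_refl (x y : R.V) : dEq R x y x y := fun _ => ⟨Iff.rfl, Iff.rfl⟩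

theorem dEq.symm {x y x' y' : R.V} (h : dEq R x y x' y') : dEq R x' y' x y :=
  fun i => ⟨(h i).1.symm, (h i).2.symm⟩

theorem dEq.trans {x y x' y' x'' y'' : R.V} (h : dEq R x y x' y') (h' : dEq R x' y' x'' y'') :
    dEq R x y x'' y'' :=
  fun i => ⟨(h i).1.trans (h' i).1, (h i).2.trans (h' i).2⟩

theorem dEq.swap {x y x' y' : R.V} (h : dEq R x y x' y') : dEq R y x y' x' :=
  fun i => ⟨(h i).2, (h i).1⟩

theorem Iso.refl (S : OrdBin ι) : Iso S S :=
  ⟨Equiv.refl _, fun _ _ => Iff.rfl, fun _ _ _ => Iff.rfl⟩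

theorem Iso.symm {S T : OrdBin ι} (h : Iso S T) : Iso T S := by
  obtain ⟨e, hle, hrel⟩ := h
  exact ⟨e.symm, fun x y => by simpa using (hle (e.symm x) (e.symm y)).symm,
    fun i x y => by simpa using (hrel i (e.symm x) (e.symm y)).symm⟩

theorem Iso.trans {S T U : OrdBin ι} (h : Iso S T) (h' : Iso T U) : Iso S U := by
  obtain ⟨e, hle, hrel⟩ := h
  obtain ⟨e', hle', hrel'⟩ := h'
  exact ⟨e.trans e', fun x y => (hle x y).trans (hle' _ _),
    fun i x y => (hrel i x y).trans (hrel' i _ _)⟩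

theorem Iso.exists_strictMonoOn {D D' : Set R.V} (h : Iso (R.restrict D) (R.restrict D')) :
    ∃ σ : R.V → R.V, StrictMonoOn σ D ∧ MapsTo σ D D' ∧
      ∀ a ∈ D, ∀ b ∈ D, dEq R a b (σ a) (σ b) := by
  classical
  obtain ⟨e, hle, hrel⟩ := h
  let σ : R.V → R.V := fun a => if ha : a ∈ D then (e ⟨a, ha⟩).1 else a
  have hσ : ∀ a (ha : a ∈ D), σ a = (e ⟨a, ha⟩).1 := fun a ha => dif_pos ha
  refine ⟨σ, fun a ha b hb hab => ?_, fun a ha => hσ a ha ▸ (e ⟨a, ha⟩).2,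
    fun a ha b hb i => ?_⟩
  · rw [hσ a ha, hσ b hb]
    have hne : e ⟨a, ha⟩ ≠ e ⟨b, hb⟩ := fun h => hab.ne (congrArg Subtype.val (e.injective h))
    exact lt_of_le_of_ne ((hle ⟨a, ha⟩ ⟨b, hb⟩).1 hab.le) (fun h => hne (Subtype.ext h))
  · rw [hσ a ha, hσ b hb]
    exact ⟨hrel i ⟨a, ha⟩ ⟨b, hb⟩, hrel i ⟨b, hb⟩ ⟨a, ha⟩⟩

theorem EqR.eqF {x y : R.V} (h : EqR R x y) {F : Set R.V} (hF : F.Finite) (hx : x ∉ F)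
    (hy : y ∉ F) : EqF R F x y :=
  h _ F hF rfl hx hy

theorem EqR.symm {x y : R.V} (h : EqR R x y) : EqR R y x :=
  fun m F hF hm hy hx => (h m F hF hm hx hy).symm

/-- If `y ∈ F`, write `F = {y} ∪ G`; then `{x} ∪ F ≅ {x, z} ∪ G ≅ {z} ∪ F`, by `y ≃ z` and then
`x ≃ y`. -/
theorem EqR.trans {x y z : R.V} (hxy : EqR R x y) (hyz : EqR R y z) : EqR R x z := by
  intro m F hF hm hxF hzF
  by_cases hyF : y ∉ F
  · exact (hxy m F hF hm hxF hyF).trans (hyz m F hF hm hyF hzF)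
  rw [not_not] at hyF
  have hxy' : x ≠ y := by rintro rfl; exact hxF hyF
  have hyz' : y ≠ z := by rintro rfl; exact hzF hyF
  rcases eq_or_ne x z with rfl | hxz
  · exact Iso.refl _
  set G := F \ {y}
  have hG : G.Finite := hF.subset sdiff_subset
  have hF_eq : F = insert y G := by rw [insert_sdiff_singleton, insert_eq_of_mem hyF]
  have h₁ : EqF R (insert x G) y z := hyz.eqF (hG.insert x)
    (by simp [G, hxy'.symm]) (by simp [G, hzF, hxz.symm])
  have h₂ : EqF R (insert z G) x y := hxy.eqF (hG.insert z)
    (by simp [G, hxF, hxz]) (by simp [G, hyz'])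
  unfold EqF at h₁ h₂ ⊢
  rw [hF_eq, insert_comm x y, insert_comm z y]
  rw [insert_comm z x] at h₁
  exact h₁.trans h₂

theorem EqR.exists_strictMonoOn (h : EqR R u w) {F : Set R.V} (hF : F.Finite)
    (hu : u ∉ F) (hw : w ∉ F) :
    ∃ σ : R.V → R.V, StrictMonoOn σ (insert u F) ∧ MapsTo σ (insert u F) (insert w F) ∧
      ∀ a ∈ insert u F, ∀ b ∈ insert u F, dEq R a b (σ a) (σ b) :=
  (h.eqF hF hu hw).exists_strictMonoOn

theorem EqR.dEq_of_mem_Ioo (h : EqR R u w) (hz : z ∈ Ioo u w) :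
    dEq R u u z z ∧ dEq R z z w w ∧ dEq R u z z w := by
  obtain ⟨σ, hσ, hmaps, hd⟩ :=
    h.exists_strictMonoOn (finite_singleton z) (by simp [hz.1.ne]) (by simp [hz.2.ne'])
  have hu : u ∈ (insert u {z} : Set R.V) := by simp
  have hz' : z ∈ (insert u {z} : Set R.V) := by simp
  obtain ⟨hσu, hσz⟩ := eq_and_eq_of_lt_of_subset_pair (pair_comm w z).subset
    (hmaps hu) (hmaps hz') (hσ hu hz' hz.1) hz.2
  refine ⟨?_, ?_, ?_⟩
  · simpa [hσu] using hd u hu u hu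
  · simpa [hσz] using hd z hz' z hz'
  · simpa [hσu, hσz] using hd u hu z hz'

theorem EqR.dEq_of_mem_Ioo_of_lt (h : EqR R u w) {z' : R.V} (hz : z ∈ Ioo u w)
    (hz' : z' ∈ Ioo u w) (hzz' : z < z') : dEq R u z z z' ∧ dEq R z z' z' w := by
  obtain ⟨σ, hσ, hmaps, hd⟩ := h.exists_strictMonoOn (toFinite ({z, z'} : Set R.V))
    (by simp [hz.1.ne, hz'.1.ne]) (by simp [hz.2.ne', hz'.2.ne'])
  have hu : u ∈ (insert u {z, z'} : Set R.V) := by simp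
  have hz₁ : z ∈ (insert u {z, z'} : Set R.V) := by simp
  have hz₂ : z' ∈ (insert u {z, z'} : Set R.V) := by simp
  obtain ⟨hσu, hσz, hσz'⟩ := eq_and_eq_and_eq_of_lt_of_subset_triple
    (by intro; simp only [mem_insert_iff, mem_singleton_iff]; tauto)
    (hmaps hu) (hmaps hz₁) (hmaps hz₂)
    (hσ hu hz₁ hz.1) (hσ hz₁ hz₂ hzz') hzz' hz'.2
  exact ⟨by simpa [hσu, hσz] using hd u hu z hz₁, by simpa [hσz, hσz'] using hd z hz₁ z' hz₂⟩

theorem EqR.dEq_of_notMem_Icc (h : EqR R u w) (huw : u ≤ w) {t : R.V} (ht : t ∉ Icc u w) :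
    dEq R u t w t := by
  have htu : t ≠ u := by rintro rfl; exact ht ⟨le_rfl, huw⟩
  have htw : t ≠ w := by rintro rfl; exact ht ⟨huw, le_rfl⟩
  obtain ⟨σ, hσ, hmaps, hd⟩ :=
    h.exists_strictMonoOn (finite_singleton t) (by simp [htu.symm]) (by simp [htw.symm])
  have hu : u ∈ (insert u {t} : Set R.V) := by simp
  have ht' : t ∈ (insert u {t} : Set R.V) := by simp
  rcases (by simpa only [mem_Icc, not_and_or, not_le] using ht : t < u ∨ w < t) with htu' | hwt
  · obtain ⟨hσt, hσu⟩ := eq_and_eq_of_lt_of_subset_pair (pair_comm w t).subset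
      (hmaps ht') (hmaps hu) (hσ ht' hu htu') (htu'.trans_le huw)
    simpa [hσu, hσt] using hd u hu t ht'
  · obtain ⟨hσu, hσt⟩ := eq_and_eq_of_lt_of_subset_pair subset_rfl
      (hmaps hu) (hmaps ht') (hσ hu ht' (huw.trans_lt hwt)) hwt
    simpa [hσu, hσt] using hd u hu t ht'

theorem EqR.dEq_of_mem_Ioo_of_notMem_Icc (h : EqR R u w) {t : R.V} (hz : z ∈ Ioo u w)
    (ht : t ∉ Icc u w) : dEq R u t z t := by
  have huw := hz.1.trans hz.2
  have htu : t ≠ u := by rintro rfl; exact ht ⟨le_rfl, huw.le⟩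
  have htw : t ≠ w := by rintro rfl; exact ht ⟨huw.le, le_rfl⟩
  obtain ⟨σ, hσ, hmaps, hd⟩ := h.exists_strictMonoOn (toFinite ({z, t} : Set R.V))
    (by simp [hz.1.ne, htu.symm]) (by simp [hz.2.ne', htw.symm])
  have hu : u ∈ (insert u {z, t} : Set R.V) := by simp
  have hz' : z ∈ (insert u {z, t} : Set R.V) := by simp
  have ht' : t ∈ (insert u {z, t} : Set R.V) := by simp
  rcases (by simpa only [mem_Icc, not_and_or, not_le] using ht : t < u ∨ w < t) with htu' | hwt
  · obtain ⟨hσt, hσu, -⟩ := eq_and_eq_and_eq_of_lt_of_subset_triple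
      (by intro; simp only [mem_insert_iff, mem_singleton_iff]; tauto)
      (hmaps ht') (hmaps hu) (hmaps hz')
      (hσ ht' hu htu') (hσ hu hz' hz.1) (htu'.trans hz.1) hz.2
    simpa [hσu, hσt] using hd u hu t ht'
  · obtain ⟨hσu, -, hσt⟩ := eq_and_eq_and_eq_of_lt_of_subset_triple
      (by intro; simp only [mem_insert_iff, mem_singleton_iff]; tauto) (hmaps hu) (hmaps hz')
      (hmaps ht') (hσ hu hz' hz.1) (hσ hz' ht' (hz.2.trans hwt)) hz.2 hwt
    simpa [hσu, hσt] using hd u hu t ht'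

def IsHomogeneous (R : OrdBin ι) (S : Set R.V) : Prop :=
  (∀ p ∈ S, ∀ q ∈ S, dEq R p p q q) ∧
    ∀ p ∈ S, ∀ q ∈ S, ∀ p' ∈ S, ∀ q' ∈ S, p < q → p' < q' → dEq R p q p' q'

theorem IsHomogeneous.dEq {S : Set R.V} (hH : IsHomogeneous R S) {a b a' b' : R.V}
    (ha : a ∈ S) (hb : b ∈ S) (ha' : a' ∈ S) (hb' : b' ∈ S) (hlt : a < b ↔ a' < b')
    (hgt : b < a ↔ b' < a') : dEq R a b a' b' := by
  rcases lt_trichotomy a b with hab | rfl | hab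
  · exact hH.2 a ha b hb a' ha' b' hb' hab (hlt.1 hab)
  · obtain rfl : a' = b' := by
      by_contra hne
      rcases lt_or_gt_of_ne hne with h | h
      exacts [lt_irrefl a (hlt.2 h), lt_irrefl a (hgt.2 h)]
    exact hH.1 a ha a' ha'
  · exact (hH.2 b hb a ha b' hb' a' ha' hab (hgt.1 hab)).swap

theorem eqR_of_isHomogeneous {S : Set R.V} (hS : IntervalR R S) (hH : IsHomogeneous R S)
    {x y : R.V} (hx : x ∈ S) (hy : y ∈ S) : EqR R x y := by
  intro m F hF _ hxF hyF
  have hD' : (insert y F).Finite := hF.insert y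
  obtain ⟨τ⟩ := (hF.insert x).nonempty_orderIso hD' (by
    rw [ncard_insert_of_notMem hxF hF, ncard_insert_of_notMem hyF hF])
  have hSc : S.OrdConnected := intervalLe_iff_ordConnected.1 hS.1
  have hfix : ∀ a : ↥(insert x F), (a : R.V) ∉ S → (τ a : R.V) = a := by
    rintro ⟨a, ha⟩ haS
    have haF : a ∈ F := ha.resolve_left (by rintro rfl; exact haS hx)
    exact τ.apply_eq_of_ncard_inter_Iic_eq hD' _ (mem_insert_of_mem _ haF)
      (ncard_insert_inter_Iic_eq hF hxF hyF (hSc.le_iff_le_of_notMem hx hy haS))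
  have hmem : ∀ a : ↥(insert x F), (a : R.V) ∈ S → (τ a : R.V) ∈ S := by
    intro a haS
    by_contra hτa
    have hτaF : (τ a : R.V) ∈ F := (τ a).2.resolve_left fun h => hτa (h.symm ▸ hy)
    have hτa' : τ ⟨τ a, mem_insert_of_mem _ hτaF⟩ = τ a :=
      Subtype.ext (hfix ⟨τ a, mem_insert_of_mem _ hτaF⟩ hτa)
    have hτa_eq : (τ a : R.V) = a := congrArg Subtype.val (τ.injective hτa')
    exact hτa (hτa_eq ▸ haS)
  have hd : ∀ a b : ↥(insert x F), dEq R a b (τ a) (τ b) := by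
    intro a b
    by_cases ha : (a : R.V) ∈ S <;> by_cases hb : (b : R.V) ∈ S
    · exact hH.dEq ha hb (hmem a ha) (hmem b hb) τ.lt_iff_lt.symm τ.lt_iff_lt.symm
    · exact hfix b hb ▸ hS.2 a ha (τ a) (hmem a ha) b hb
    · exact hfix a ha ▸ (hS.2 b hb (τ b) (hmem b hb) a ha).swap
    · rw [hfix a ha, hfix b hb]
      exact dEq_refl _ _
  exact ⟨τ.toEquiv, fun a b => τ.le_iff_le.symm, fun i a b => (hd a b i).1⟩

theorem EqR.dEq_left_of_mem_Ioo (h : EqR R u w) {z' : R.V} (hz : z ∈ Ioo u w)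
    (hz' : z' ∈ Ioo u w) : dEq R u z u z' := by
  have key : ∀ {z z'}, z ∈ Ioo u w → z' ∈ Ioo u w → z < z' → dEq R u z u z' :=
    fun hz hz' hzz' => (h.dEq_of_mem_Ioo_of_lt hz hz' hzz').1.trans
      ((h.dEq_of_mem_Ioo_of_lt hz hz' hzz').2.trans (h.dEq_of_mem_Ioo hz').2.2.symm)
  rcases lt_trichotomy z z' with hzz' | rfl | hzz'
  exacts [key hz hz' hzz', dEq_refl _ _, (key hz' hz hzz').symm]

theorem EqR.dEq_of_lt_of_mem_Icc (h : EqR R u w) {p q : R.V} (hz : z ∈ Ioo u w)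
    (hp : u ≤ p) (hpq : p < q) (hq : q ≤ w) (hne : ¬(p = u ∧ q = w)) : dEq R p q u z := by
  rcases eq_or_ne p u with rfl | hpu
  · exact h.dEq_left_of_mem_Ioo ⟨hpq, lt_of_le_of_ne hq fun hqw => hne ⟨rfl, hqw⟩⟩ hz
  have hp' : p ∈ Ioo u w := ⟨lt_of_le_of_ne hp (Ne.symm hpu), hpq.trans_le hq⟩
  have hpq_up : dEq R p q u p := by
    rcases eq_or_ne q w with rfl | hqw
    · exact (h.dEq_of_mem_Ioo hp').2.2.symm
    · exact (h.dEq_of_mem_Ioo_of_lt hp' ⟨hp'.1.trans hpq, lt_of_le_of_ne hq hqw⟩ hpq).1.symm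
  exact hpq_up.trans (h.dEq_left_of_mem_Ioo hp' hz)

theorem EqR.isHomogeneous_Ioo (h : EqR R u w) : IsHomogeneous R (Ioo u w) :=
  ⟨fun _ hp _ hq => (h.dEq_of_mem_Ioo hp).1.symm.trans (h.dEq_of_mem_Ioo hq).1,
    fun _ hp _ hq _ hp' _ hq' hpq hpq' =>
      (h.dEq_of_lt_of_mem_Icc hp hp.1.le hpq hq.2.le fun hpu => hp.1.ne' hpu.1).trans
        (h.dEq_of_lt_of_mem_Icc hp hp'.1.le hpq' hq'.2.le fun hpu => hp'.1.ne' hpu.1).symm⟩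

theorem EqR.intervalR_Ioo (h : EqR R u w) : IntervalR R (Ioo u w) := by
  refine ⟨intervalLe_iff_ordConnected.2 ordConnected_Ioo, fun p hp p' hp' t ht => ?_⟩
  by_cases htI : t ∈ Icc u w
  · rcases htI.1.eq_or_lt with rfl | htu
    · exact (h.dEq_left_of_mem_Ioo hp hp').swap
    obtain rfl : t = w := htI.2.eq_or_lt.resolve_right fun htw => ht ⟨htu, htw⟩
    exact (h.dEq_of_mem_Ioo hp).2.2.symm.trans
      ((h.dEq_left_of_mem_Ioo hp hp').trans (h.dEq_of_mem_Ioo hp').2.2)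
  · exact (h.dEq_of_mem_Ioo_of_notMem_Icc hp htI).symm.trans
      (h.dEq_of_mem_Ioo_of_notMem_Icc hp' htI)

theorem EqR.intervalR_Icc (h : EqR R u w) (huw : u ≤ w) : IntervalR R (Icc u w) := by
  have key : ∀ p ∈ Icc u w, ∀ t ∉ Icc u w, dEq R u t p t := by
    intro p hp t ht
    rcases hp.1.eq_or_lt with rfl | hup
    · exact dEq_refl _ _
    rcases hp.2.eq_or_lt with rfl | hpw
    · exact h.dEq_of_notMem_Icc huw ht
    · exact h.dEq_of_mem_Ioo_of_notMem_Icc ⟨hup, hpw⟩ ht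
  exact ⟨intervalLe_iff_ordConnected.2 ordConnected_Icc,
    fun p hp p' hp' t ht => (key p hp t ht).symm.trans (key p' hp' t ht)⟩

theorem EqR.isHomogeneous_Icc (h : EqR R u w) (hz : z ∈ Ioo u w)
    (hc : dEq R u w u z) : IsHomogeneous R (Icc u w) := by
  have hloop : ∀ p ∈ Icc u w, dEq R u u p p := by
    intro p hp
    rcases hp.1.eq_or_lt with rfl | hup
    · exact dEq_refl _ _
    rcases hp.2.eq_or_lt with rfl | hpw
    · exact (h.dEq_of_mem_Ioo hz).1.trans (h.dEq_of_mem_Ioo hz).2.1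
    · exact (h.dEq_of_mem_Ioo ⟨hup, hpw⟩).1
  have hpair : ∀ p ∈ Icc u w, ∀ q ∈ Icc u w, p < q → dEq R p q u z := by
    intro p hp q hq hpq
    by_cases hpq_uw : p = u ∧ q = w
    · obtain ⟨rfl, rfl⟩ := hpq_uw
      exact hc
    · exact h.dEq_of_lt_of_mem_Icc hz hp.1 hpq hq.2 hpq_uw
  exact ⟨fun p hp q hq => (hloop p hp).symm.trans (hloop q hq),
    fun p hp q hq p' hp' q' hq' hpq hpq' =>
      (hpair p hp q hq hpq).trans (hpair p' hp' q' hq' hpq').symm⟩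

theorem EqR.eq_or_eq_of_not_dEq (huw : EqR R u w) (hz : z ∈ Ioo u w) (hc : ¬dEq R u w u z)
    {v : R.V} (hv : EqR R u v) : v = u ∨ v = w := by
  by_contra! hne
  rcases lt_or_gt_of_ne hne.1 with hvu | huv
  · have hvw : EqR R v w := hv.symm.trans huw
    have hu : u ∈ Ioo v w := ⟨hvu, hz.1.trans hz.2⟩
    exact hc ((hvw.dEq_of_lt_of_mem_Icc hu hvu.le hu.2 le_rfl fun h => hvu.ne' h.1).trans
      (hvw.dEq_of_lt_of_mem_Icc hu hvu.le hz.1 hz.2.le fun h => hvu.ne' h.1).symm)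
  rcases lt_or_gt_of_ne hne.2 with hvw | hwv
  · exact hc ((hv.dEq_of_notMem_Icc huv.le fun h => hvw.not_ge h.2).trans
      (huw.dEq_of_lt_of_mem_Icc hz huv.le hvw le_rfl fun h => huv.ne' h.1))
  · exact hc (hv.dEq_of_lt_of_mem_Icc ⟨hz.1, hz.2.trans hwv⟩ le_rfl (hz.1.trans hz.2) hwv.le
      fun h => hwv.ne h.2)

theorem EqR.Ioo_eq_setOf_eqR (huw : EqR R u w) (hz : z ∈ Ioo u w) (hc : ¬dEq R u w u z) :
    Ioo u w = {v | EqR R z v} := by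
  refine Subset.antisymm (fun v hv => eqR_of_isHomogeneous huw.intervalR_Ioo
    huw.isHomogeneous_Ioo hz hv) fun v hzv => ?_
  by_contra hv
  rcases not_and_or.1 hv with hvu | hwv
  · have hvz : v ≤ z := (not_lt.1 hvu).trans hz.1.le
    have hd := (hzv.symm.intervalR_Icc hvz).2 u ⟨not_lt.1 hvu, hz.1.le⟩ z ⟨hvz, le_rfl⟩ w
      fun h => hz.2.not_ge h.2
    exact hc (hd.trans (huw.dEq_of_lt_of_mem_Icc hz hz.1.le hz.2 le_rfl fun h => hz.1.ne' h.1))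
  · have hzv' : z ≤ v := hz.2.le.trans (not_lt.1 hwv)
    have hd := (hzv.intervalR_Icc hzv').2 z ⟨le_rfl, hzv'⟩ w ⟨hz.2.le, not_lt.1 hwv⟩ u
      fun h => hz.1.not_ge h.1
    exact hc hd.swap.symm

end OrdBin

/-- Every equivalence class `A` of `≃_R` on an ordered binary structure `R`
is either an interval of the linear order `(V, ≤)`, or a two-element set `{x, y}` with
`x < y` such that the open interval `]x,y[` is itself an equivalence class of `≃_R`. -/
theorem equivalence_class_structure {ι : Type} (R : OrdBin ι)
    (A : Set R.V) (hA : ∃ a : R.V, A = {y | OrdBin.EqR R a y}) :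
    OrdBin.IntervalLe R A ∨
      ∃ x y : R.V, R.le x y ∧ x ≠ y ∧ A = {x, y} ∧
        ∃ b : R.V,
          {z : R.V | (R.le x z ∧ x ≠ z) ∧ (R.le z y ∧ z ≠ y)} =
            {w : R.V | OrdBin.EqR R b w} := by
  obtain ⟨a, rfl⟩ := hA
  by_cases hI : OrdBin.IntervalLe R {y | OrdBin.EqR R a y}
  · exact Or.inl hI
  simp only [OrdBin.intervalLe_iff_ordConnected, Set.ordConnected_def, not_forall,
    Set.not_subset] at hI
  obtain ⟨u, hu, w, hw, z, ⟨huz, hzw⟩, hz⟩ := hI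
  have huw : OrdBin.EqR R u w := hu.symm.trans hw
  have hzI : z ∈ Set.Ioo u w := ⟨huz.lt_of_ne (by rintro rfl; exact hz hu),
    hzw.lt_of_ne (by rintro rfl; exact hz hw)⟩
  have hle : u ≤ w := huz.trans hzw
  have hc : ¬OrdBin.dEq R u w u z := fun hc => hz (hu.trans (OrdBin.eqR_of_isHomogeneous
    (huw.intervalR_Icc hle) (huw.isHomogeneous_Icc hzI hc) ⟨le_rfl, hle⟩ ⟨huz, hzw⟩))
  refine Or.inr ⟨u, w, (hzI.1.trans hzI.2).le, (hzI.1.trans hzI.2).ne, ?_, z, ?_⟩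
  · ext v
    exact ⟨fun hv => huw.eq_or_eq_of_not_dEq hzI hc (hu.symm.trans hv),
      by rintro (rfl | rfl); exacts [hu, hw]⟩
  · rw [← huw.Ioo_eq_setOf_eqR hzI hc]
    ext v
    simp only [Set.mem_Ioo, lt_iff_le_and_ne]
    rfl
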